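/- arXiv:2502.17992 — 6 statements merged into one kernel-verified Lean document; each statement's English description precedes it below -/
import Mathlib

section
/- For all integers d ≥ 2 and δ ≥ 1, the minimum of ψ(d,δ,p) over integers p ≥ δd is attained at p₁ = δd−1+⌊δ√(d²−d)⌋ or at p₂ = p₁+1; that is, min(ψ(d,δ,p₁), ψ(d,δ,p₂)) ≤ ψ(d,δ,p) for every integer p ≥ δd. -/
open scoped Classical

/-- ψ(d,δ,x) = δd²(x−δ+1)/(x−δd+1) + d(x−δ+1) − 1 -/
noncomputable def psi (d δ : ℤ) (x : ℝ) : ℝ :=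
  (δ : ℝ) * (d : ℝ) ^ 2 * (x - (δ : ℝ) + 1) / (x - (δ : ℝ) * (d : ℝ) + 1)
    + (d : ℝ) * (x - (δ : ℝ) + 1) - 1

/-- p₁ = δd − 1 + ⌊δ√(d²−d)⌋ -/
noncomputable def p1 (d δ : ℤ) : ℤ :=
  δ * d - 1 + ⌊(δ : ℝ) * Real.sqrt ((d : ℝ) ^ 2 - (d : ℝ))⌋

/-- λ : the minimizer of ψ(d,δ,·) among p₁ and p₂ = p₁ + 1 -/
noncomputable def lam (d δ : ℤ) : ℤ :=
  if psi d δ (p1 d δ : ℝ) ≤ psi d δ ((p1 d δ : ℝ) + 1) then p1 d δ else p1 d δ + 1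

/-! The map `t ↦ c / t + t` on `t > 0` decreases up to `√c` and increases after it, and
`ψ(d,δ,·)` is such a map in the shifted variable `t = x − δd + 1` with `c = (δ√(d²−d))²`.
So among the integers `t ≥ 1` the minimum sits at `⌊√c⌋` or `⌊√c⌋ + 1`, which are `p₁` and
`p₂` after the shift. -/

lemma div_add_self_sub_div_add_self {s t : ℝ} (c : ℝ) (hs : s ≠ 0) (ht : t ≠ 0) :
    c / s + s - (c / t + t) = (t - s) * (c - s * t) / (s * t) := by
  field_simp
  ring

lemma div_add_self_le_div_add_self_of_mul_le {s t c : ℝ} (hs : 0 < s) (hst : s ≤ t)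
    (h : s * t ≤ c) : c / t + t ≤ c / s + s := by
  rw [← sub_nonneg, div_add_self_sub_div_add_self c hs.ne' (hs.trans_le hst).ne']
  exact div_nonneg (mul_nonneg (sub_nonneg.2 hst) (sub_nonneg.2 h))
    (mul_pos hs (hs.trans_le hst)).le

lemma div_add_self_le_div_add_self_of_le_mul {s t c : ℝ} (hs : 0 < s) (hst : s ≤ t)
    (h : c ≤ s * t) : c / s + s ≤ c / t + t := by
  rw [← sub_nonpos, div_add_self_sub_div_add_self c hs.ne' (hs.trans_le hst).ne']
  exact div_nonpos_of_nonpos_of_nonneg (mul_nonpos_of_nonneg_of_nonpos (sub_nonneg.2 hst)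
    (sub_nonpos.2 h)) (mul_pos hs (hs.trans_le hst)).le

lemma sq_div_add_self_floor_le_or_floor_add_one_le {r : ℝ} (hr : 0 ≤ r) {m : ℤ} (hm : 1 ≤ m) :
    r ^ 2 / ⌊r⌋ + ⌊r⌋ ≤ r ^ 2 / m + m ∨
      r ^ 2 / (⌊r⌋ + 1) + (⌊r⌋ + 1) ≤ r ^ 2 / m + m := by
  have hm' : (1 : ℝ) ≤ m := by exact_mod_cast hm
  rcases le_or_gt m ⌊r⌋ with hle | hgt
  · have hmr : (m : ℝ) ≤ ⌊r⌋ := by exact_mod_cast hle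
    have hfl : (⌊r⌋ : ℝ) ≤ r := Int.floor_le r
    refine .inl (div_add_self_le_div_add_self_of_mul_le (by linarith) hmr ?_)
    nlinarith
  · have hmr : (⌊r⌋ : ℝ) + 1 ≤ m := by exact_mod_cast hgt
    have hfl : r < ⌊r⌋ + 1 := Int.lt_floor_add_one r
    refine .inr (div_add_self_le_div_add_self_of_le_mul (by linarith) hmr ?_)
    nlinarith

lemma psi_eq_of_ne {d δ : ℤ} {x : ℝ} (hx : x - δ * d + 1 ≠ 0) :
    psi d δ x = d * (δ ^ 2 * ((d : ℝ) ^ 2 - d) / (x - δ * d + 1) + (x - δ * d + 1))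
      + (δ * d ^ 2 + d * (δ * d - δ) - 1) := by
  unfold psi
  field_simp
  ring

theorem stmt_2 (d δ : ℤ) (hd : 2 ≤ d) (hδ : 1 ≤ δ) :
    ∀ p : ℤ, δ * d ≤ p →
      min (psi d δ (p1 d δ : ℝ)) (psi d δ ((p1 d δ : ℝ) + 1)) ≤ psi d δ (p : ℝ) := by
  intro p hp
  have hd' : (2 : ℝ) ≤ d := by exact_mod_cast hd
  have hδ' : (1 : ℝ) ≤ δ := by exact_mod_cast hδ
  set r : ℝ := δ * √((d : ℝ) ^ 2 - d) with hr_def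
  have hr_sq : r ^ 2 = δ ^ 2 * ((d : ℝ) ^ 2 - d) := by
    rw [hr_def, mul_pow, Real.sq_sqrt (by nlinarith)]
  have hr : 1 ≤ r := one_le_mul_of_one_le_of_one_le hδ' (Real.one_le_sqrt.2 (by nlinarith))
  have hfloor : (1 : ℝ) ≤ ⌊r⌋ := by exact_mod_cast Int.le_floor.2 (by exact_mod_cast hr)
  have hp1 : (p1 d δ : ℝ) - δ * d + 1 = ⌊r⌋ := by simp only [p1, hr_def]; push_cast; ring
  have hp2 : (p1 d δ : ℝ) + 1 - δ * d + 1 = ⌊r⌋ + 1 := by linarith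
  have hp_cast : ((p - δ * d + 1 : ℤ) : ℝ) = p - δ * d + 1 := by push_cast; ring
  rw [psi_eq_of_ne (by rw [hp1]; linarith), psi_eq_of_ne (by rw [hp2]; linarith),
    psi_eq_of_ne (by rw [← hp_cast]; exact_mod_cast (by omega : p - δ * d + 1 ≠ 0)), hp1, hp2,
    ← hr_sq, ← hp_cast]
  rcases sq_div_add_self_floor_le_or_floor_add_one_le (r := r) (by linarith)
    (by omega : 1 ≤ p - δ * d + 1) with h | h
  · exact min_le_of_left_le (by gcongr)
  · exact min_le_of_right_le (by gcongr)
end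

section
/- For all integers d ≥ 2 and δ ≥ 1, letting λ be the integer among p₁ = δd−1+⌊δ√(d²−d)⌋ and p₂ = p₁+1 minimizing ψ(d,δ,·), we have ψ(d,δ,λ) ≥ (2d² + 2d√(d²−d) − d)δ − 1. -/
open scoped Classical

/-!
Substituting t = x − δd + 1 turns ψ into δ²d²(d−1)/t + dt + (2d² − d)δ − 1, and by AM-GM
the two terms depending on t add up to at least 2δd√(d² − d) as soon as t > 0.
For x = λ we have t ≥ ⌊δ√(d² − d)⌋ ≥ 1.
-/

lemma two_sqrt_mul_le_div_add_mul {a b t : ℝ} (ha : 0 ≤ a) (hb : 0 ≤ b) (ht : 0 < t) :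
    2 * Real.sqrt (a * b) ≤ a / t + b * t := by
  rw [Real.sqrt_mul ha, div_add' _ _ _ ht.ne', le_div_iff₀ ht]
  have hsq := sq_nonneg (Real.sqrt a - Real.sqrt b * t)
  rw [sub_sq, mul_pow, Real.sq_sqrt ha, Real.sq_sqrt hb] at hsq
  linarith

lemma psi_eq (d δ : ℤ) {x : ℝ} (hx : x - δ * d + 1 ≠ 0) :
    psi d δ x = (δ : ℝ) ^ 2 * d ^ 2 * (d - 1) / (x - δ * d + 1) + d * (x - δ * d + 1)
      + (2 * d ^ 2 - d) * δ - 1 := by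
  unfold psi
  field_simp
  ring

lemma le_psi {d δ : ℤ} (hd : 1 ≤ d) (hδ : 0 ≤ δ) {x : ℝ} (hx : 0 < x - δ * d + 1) :
    (2 * (d : ℝ) ^ 2 + 2 * d * Real.sqrt ((d : ℝ) ^ 2 - d) - d) * δ - 1 ≤ psi d δ x := by
  have hd' : (1 : ℝ) ≤ d := by exact_mod_cast hd
  have hδ' : (0 : ℝ) ≤ δ := by exact_mod_cast hδ
  have hsqrt :
      Real.sqrt ((δ : ℝ) ^ 2 * d ^ 2 * (d - 1) * d) = δ * d * Real.sqrt ((d : ℝ) ^ 2 - d) := by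
    rw [show (δ : ℝ) ^ 2 * d ^ 2 * (d - 1) * d = (δ * d) ^ 2 * (d ^ 2 - d) by ring,
      Real.sqrt_mul (by positivity), Real.sqrt_sq (by positivity)]
  have hd1 : (0 : ℝ) ≤ d - 1 := by linarith
  have amgm := two_sqrt_mul_le_div_add_mul (a := (δ : ℝ) ^ 2 * d ^ 2 * (d - 1)) (b := d)
    (by positivity) (by linarith) hx
  rw [hsqrt] at amgm
  rw [psi_eq d δ hx.ne']
  linarith

lemma mul_le_p1 {d δ : ℤ} (hd : 2 ≤ d) (hδ : 1 ≤ δ) : δ * d ≤ p1 d δ := by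
  have hd' : (2 : ℝ) ≤ d := by exact_mod_cast hd
  have hδ' : (1 : ℝ) ≤ δ := by exact_mod_cast hδ
  have hsqrt : 1 ≤ Real.sqrt ((d : ℝ) ^ 2 - d) := Real.one_le_sqrt.mpr (by nlinarith)
  have hfloor : 1 ≤ ⌊(δ : ℝ) * Real.sqrt ((d : ℝ) ^ 2 - d)⌋ :=
    Int.le_floor.mpr (by push_cast; nlinarith)
  unfold p1
  omega

lemma p1_le_lam (d δ : ℤ) : p1 d δ ≤ lam d δ := by
  unfold lam
  split_ifs <;> omega

theorem stmt_3 (d δ : ℤ) (hd : 2 ≤ d) (hδ : 1 ≤ δ) :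
    (2 * (d : ℝ) ^ 2 + 2 * (d : ℝ) * Real.sqrt ((d : ℝ) ^ 2 - (d : ℝ)) - (d : ℝ)) * (δ : ℝ) - 1
      ≤ psi d δ (lam d δ : ℝ) := by
  have hlam : δ * d ≤ lam d δ := (mul_le_p1 hd hδ).trans (p1_le_lam d δ)
  have hlam' : (δ : ℝ) * d ≤ lam d δ := by exact_mod_cast hlam
  exact le_psi (by omega) (by omega) (by linarith)
end

section
/- For all integers d ≥ 2 and δ ≥ 1, with λ as the minimizer of ψ(d,δ,·) among p₁ = δd−1+⌊δ√(d²−d)⌋ and p₂ = p₁+1, we have ψ(d,δ,λ) ≤ (2d² + 2d√(d²−d) − d)δ − 1 + d/(δ√(d²−d) − 1). -/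
open scoped Classical

/-!
Write `r = √(d² − d)` and `s = δ r`. Substituting `x = δd − 1 + t` turns `ψ` into
`(2d² + 2dr − d)δ − 1 + d (s − t)² / t`, so the claim says that the excess `d (s − t)² / t`
at `t = ⌊s⌋` (that is, at `x = p₁`) is at most `d / (s − 1)`. With `u = s − ⌊s⌋ ∈ [0, 1)` this is
`u² (s − 1) ≤ s − 1 < ⌊s⌋`.
-/

lemma psi_mul_sub_one_add (d δ : ℤ) {r t : ℝ} (hr : r ^ 2 = (d : ℝ) ^ 2 - d) (ht : t ≠ 0) :
    psi d δ (δ * d - 1 + t) =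
      (2 * (d : ℝ) ^ 2 + 2 * d * r - d) * δ - 1 + d * (δ * r - t) ^ 2 / t := by
  rw [psi, show (δ : ℝ) * d - 1 + t - δ * d + 1 = t by ring]
  field_simp
  linear_combination (-(δ : ℝ) ^ 2 * d) * hr

lemma sq_fract_div_floor_le_one_div_sub_one {s : ℝ} (hs : 1 < s) :
    Int.fract s ^ 2 / ⌊s⌋ ≤ 1 / (s - 1) := by
  have hfloor : (0 : ℝ) < ⌊s⌋ := by
    exact_mod_cast Int.floor_pos.mpr hs.le
  have hfract_sq_le_one : Int.fract s ^ 2 ≤ 1 :=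
    pow_le_one₀ (Int.fract_nonneg s) (Int.fract_lt_one s).le
  rw [div_le_div_iff₀ hfloor (by linarith)]
  calc Int.fract s ^ 2 * (s - 1) ≤ s - 1 := mul_le_of_le_one_left (by linarith) hfract_sq_le_one
    _ ≤ 1 * ⌊s⌋ := by linarith [Int.sub_one_lt_floor s]

lemma psi_lam_le_psi_p1 (d δ : ℤ) : psi d δ (lam d δ) ≤ psi d δ (p1 d δ) := by
  unfold lam
  split_ifs with h
  · exact le_rfl
  · push_cast
    exact (not_le.mp h).le

theorem stmt_4 (d δ : ℤ) (hd : 2 ≤ d) (hδ : 1 ≤ δ) :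
    psi d δ (lam d δ : ℝ) ≤
      (2 * (d : ℝ) ^ 2 + 2 * (d : ℝ) * Real.sqrt ((d : ℝ) ^ 2 - (d : ℝ)) - (d : ℝ)) * (δ : ℝ)
        - 1 + (d : ℝ) / ((δ : ℝ) * Real.sqrt ((d : ℝ) ^ 2 - (d : ℝ)) - 1) := by
  have hd' : (2 : ℝ) ≤ d := by exact_mod_cast hd
  have hδ' : (1 : ℝ) ≤ δ := by exact_mod_cast hδ
  set r := Real.sqrt ((d : ℝ) ^ 2 - d)
  have hr : r ^ 2 = (d : ℝ) ^ 2 - d := Real.sq_sqrt (by nlinarith)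
  have hr_gt_one : 1 < r := Real.lt_sqrt zero_le_one |>.mpr (by nlinarith)
  have hs : 1 < (δ : ℝ) * r := by nlinarith
  have hfloor : (⌊(δ : ℝ) * r⌋ : ℝ) ≠ 0 := by
    exact_mod_cast (Int.floor_pos.mpr hs.le).ne'
  calc psi d δ (lam d δ) ≤ psi d δ (p1 d δ) := psi_lam_le_psi_p1 d δ
    _ = (2 * (d : ℝ) ^ 2 + 2 * d * r - d) * δ - 1
          + d * (Int.fract ((δ : ℝ) * r) ^ 2 / ⌊(δ : ℝ) * r⌋) := by
      rw [p1, Int.fract, mul_div_assoc']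
      push_cast
      exact psi_mul_sub_one_add d δ hr hfloor
    _ ≤ (2 * (d : ℝ) ^ 2 + 2 * d * r - d) * δ - 1 + d * (1 / ((δ : ℝ) * r - 1)) := by
      gcongr _ + _ * ?_
      exact sq_fract_div_floor_le_one_div_sub_one hs
    _ = _ := by ring
end

section
/- For all integers d ≥ 2 and δ ≥ 1, letting λ(δ) be the integer among δd−1+⌊δ√(d²−d)⌋ and δd+⌊δ√(d²−d)⌋ minimizing ψ(d,δ,·), the function δ ↦ ψ(d,δ,λ(δ)) is strictly increasing: ψ(d,δ+1,λ(δ+1)) > ψ(d,δ,λ(δ)). -/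
open scoped Classical

/-!
Write `x = δd − 1 + t` and `s = √(d² − d)`. Then `ψ(d,δ,x) = d (t + (δs)²/t) + δ(2d² − d) − 1`,
which by AM-GM is at least `m(δ) = 2dδs + δ(2d² − d) − 1`. At `t = ⌊δs⌋ + 1 ∈ [δs, δs + 1]` it
exceeds `m(δ)` by `d (t − δs)²/t ≤ d`. Hence `m(δ) ≤ ψ(d,δ,λ(δ)) ≤ m(δ) + d`, and
`m(δ + 1) − m(δ) − d = 2ds + 2d(d − 1) > 0`.
-/

open Real

lemma two_mul_le_add_sq_div (c : ℝ) {t : ℝ} (ht : 0 < t) : 2 * c ≤ t + c ^ 2 / t := by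
  have hsq : t + c ^ 2 / t - 2 * c = (t - c) ^ 2 / t := by field_simp; ring
  have := div_nonneg (sq_nonneg (t - c)) ht.le
  linarith

lemma add_sq_div_le {c t : ℝ} (ht : 1 ≤ t) (hlo : c ≤ t) (hhi : t ≤ c + 1) :
    t + c ^ 2 / t ≤ 2 * c + 1 := by
  have hsq : t + c ^ 2 / t - 2 * c = (t - c) ^ 2 / t := by field_simp; ring
  have : (t - c) ^ 2 / t ≤ 1 := by
    rw [div_le_one (by linarith)]
    nlinarith
  linarith

lemma sq_sqrt_sq_sub_self (d : ℤ) : √((d : ℝ) ^ 2 - d) ^ 2 = (d : ℝ) ^ 2 - d := by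
  have h : (0 : ℤ) ≤ d ^ 2 - d := by rcases le_or_gt 1 d with h | h <;> nlinarith
  exact sq_sqrt (by exact_mod_cast h)

lemma psi_sub_one_add (d δ : ℤ) {t : ℝ} (ht : t ≠ 0) :
    psi d δ (δ * d - 1 + t)
      = d * (t + (δ * √((d : ℝ) ^ 2 - d)) ^ 2 / t) + δ * (2 * d ^ 2 - d) - 1 := by
  rw [mul_pow, sq_sqrt_sq_sub_self, psi, show (δ * d - 1 + t - δ + 1 : ℝ) = δ * d - δ + t by ring,
    show (δ * d - 1 + t - δ * d + 1 : ℝ) = t by ring]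
  field_simp
  ring

/-- `m(δ)`, the minimum of `ψ(d,δ,·)` over real `x > δd − 1`, attained at `x = δd − 1 + δ√(d² − d)`. -/
noncomputable def psiInf (d δ : ℤ) : ℝ :=
  2 * d * (δ * √((d : ℝ) ^ 2 - d)) + δ * (2 * d ^ 2 - d) - 1

lemma psiInf_add_lt_psiInf_add_one {d : ℤ} (hd : 1 < d) (δ : ℤ) :
    psiInf d δ + d < psiInf d (δ + 1) := by
  have hd' : (1 : ℝ) < d := by exact_mod_cast hd
  have : 0 ≤ 2 * (d : ℝ) * √((d : ℝ) ^ 2 - d) := by positivity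
  simp only [psiInf]
  push_cast
  nlinarith

lemma one_le_floor_mul_sqrt {d δ : ℤ} (hd : 2 ≤ d) (hδ : 1 ≤ δ) :
    (1 : ℝ) ≤ ⌊(δ : ℝ) * √((d : ℝ) ^ 2 - d)⌋ := by
  have hd' : (2 : ℝ) ≤ d := by exact_mod_cast hd
  have hδ' : (1 : ℝ) ≤ δ := by exact_mod_cast hδ
  have hs : 1 ≤ √((d : ℝ) ^ 2 - d) := one_le_sqrt.mpr (by nlinarith)
  rw [← Int.cast_one, Int.cast_le, Int.le_floor, Int.cast_one]
  nlinarith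

lemma cast_p1 (d δ : ℤ) : (p1 d δ : ℝ) = δ * d - 1 + ⌊(δ : ℝ) * √((d : ℝ) ^ 2 - d)⌋ := by
  simp [p1]

lemma lam_eq_or (d δ : ℤ) : lam d δ = p1 d δ ∨ lam d δ = p1 d δ + 1 := by
  unfold lam
  split_ifs <;> simp

lemma psi_lam_le_psi_p1_add_one (d δ : ℤ) : psi d δ (lam d δ) ≤ psi d δ (p1 d δ + 1) := by
  unfold lam
  split_ifs with h
  · exact h
  · push_cast
    exact le_rfl

lemma psiInf_le_psi_lam {d δ : ℤ} (hd : 2 ≤ d) (hδ : 1 ≤ δ) : psiInf d δ ≤ psi d δ (lam d δ) := by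
  have hm := one_le_floor_mul_sqrt hd hδ
  obtain ⟨t, ht, hlam⟩ : ∃ t : ℝ, 1 ≤ t ∧ (lam d δ : ℝ) = δ * d - 1 + t := by
    rcases lam_eq_or d δ with h | h
    · exact ⟨_, hm, by rw [h, cast_p1]⟩
    · exact ⟨_ + 1, by linarith, by rw [h, Int.cast_add, cast_p1, Int.cast_one]; ring⟩
  have hd' : (0 : ℝ) ≤ d := by exact_mod_cast (by omega : (0 : ℤ) ≤ d)
  have amgm := two_mul_le_add_sq_div (δ * √((d : ℝ) ^ 2 - d)) (t := t) (by positivity)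
  rw [hlam, psi_sub_one_add d δ (by positivity), psiInf]
  linarith [mul_le_mul_of_nonneg_left amgm hd']

lemma psi_lam_le_psiInf_add {d δ : ℤ} (hd : 2 ≤ d) (hδ : 1 ≤ δ) :
    psi d δ (lam d δ) ≤ psiInf d δ + d := by
  have hm := one_le_floor_mul_sqrt hd hδ
  set c := (δ : ℝ) * √((d : ℝ) ^ 2 - d)
  have hd' : (0 : ℝ) ≤ d := by exact_mod_cast (by omega : (0 : ℤ) ≤ d)
  calc psi d δ (lam d δ) ≤ psi d δ (δ * d - 1 + (⌊c⌋ + 1)) := by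
        rw [show (δ * d - 1 + (⌊c⌋ + 1) : ℝ) = p1 d δ + 1 by rw [cast_p1]; ring]
        exact psi_lam_le_psi_p1_add_one d δ
    _ = d * ((⌊c⌋ + 1) + c ^ 2 / (⌊c⌋ + 1)) + δ * (2 * d ^ 2 - d) - 1 :=
        psi_sub_one_add d δ (by positivity)
    _ ≤ d * (2 * c + 1) + δ * (2 * d ^ 2 - d) - 1 := by
        have := add_sq_div_le (by linarith) (Int.lt_floor_add_one c).le (by linarith [Int.floor_le c])
        linarith [mul_le_mul_of_nonneg_left this hd']
    _ = psiInf d δ + d := by rw [psiInf]; ring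

theorem stmt_11 (d δ : ℤ) (hd : 2 ≤ d) (hδ : 1 ≤ δ) :
    psi d δ (lam d δ : ℝ) < psi d (δ + 1) (lam d (δ + 1) : ℝ) :=
  calc psi d δ (lam d δ) ≤ psiInf d δ + d := psi_lam_le_psiInf_add hd hδ
    _ < psiInf d (δ + 1) := psiInf_add_lt_psiInf_add_one (by omega) δ
    _ ≤ psi d (δ + 1) (lam d (δ + 1)) := psiInf_le_psi_lam hd (by omega)
end

section
/- For all integers d ≥ 2 and δ ≥ 1, one has ψ(d,δ,λ) ≤ 4δd² − 2δd − 1, with equality when δ = 1 and strict inequality when δ ≥ 2, where λ is the minimizer of ψ(d,δ,·) among p₁ = δd−1+⌊δ√(d²−d)⌋ and p₂ = p₁+1. -/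
/-!
Writing x = δd − 1 + t, a direct computation gives
ψ(d,δ,x) = 4δd² − 2δd − 1 + d (t − δ(d−1)) (t − δd) / t,
so for t > 0 the bound holds exactly when δ(d−1) ≤ t ≤ δd, with equality at the endpoints.
For p₁ and p₂ the shift is t = ⌊δ√(d²−d)⌋ resp. ⌊δ√(d²−d)⌋ + 1, and d − 1 ≤ √(d²−d) < d puts
the floor in [δ(d−1), δd). For δ = 1 the two shifts are the endpoints d − 1 and d; for δ ≥ 2
one of them lies strictly inside the interval.
-/

open scoped Classical

theorem psi_shift (d δ : ℤ) {t : ℝ} (ht : t ≠ 0) :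
    psi d δ (δ * d - 1 + t) =
      4 * δ * d ^ 2 - 2 * δ * d - 1 + d * (t - δ * (d - 1)) * (t - δ * d) / t := by
  unfold psi
  rw [show (δ * d - 1 + t - δ * d + 1 : ℝ) = t by ring]
  field_simp
  ring

theorem psi_shift_lt {d δ : ℤ} (hd : 0 < d) {t : ℝ} (ht : 0 < t) (hlo : δ * (d - 1) < t)
    (hhi : t < δ * d) : psi d δ (δ * d - 1 + t) < 4 * δ * d ^ 2 - 2 * δ * d - 1 := by
  have hneg : (d : ℝ) * (t - δ * (d - 1)) * (t - δ * d) / t < 0 :=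
    div_neg_of_neg_of_pos
      (mul_neg_of_pos_of_neg (mul_pos (by exact_mod_cast hd) (sub_pos.2 hlo)) (sub_neg.2 hhi)) ht
  rw [psi_shift d δ ht.ne']
  linarith

theorem Real.sqrt_sq_sub_self_mem_Ico {x : ℝ} (hx : 1 ≤ x) : √(x ^ 2 - x) ∈ Set.Ico (x - 1) x :=
  ⟨Real.le_sqrt_of_sq_le (by nlinarith), (Real.sqrt_lt' (by linarith)).2 (by linarith)⟩

theorem floor_mul_sqrt_mem_Ico {d δ : ℤ} (hd : 1 ≤ d) (hδ : 0 < δ) :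
    ⌊(δ : ℝ) * √((d : ℝ) ^ 2 - d)⌋ ∈ Set.Ico (δ * (d - 1)) (δ * d) := by
  obtain ⟨hlo, hhi⟩ := Real.sqrt_sq_sub_self_mem_Ico (x := d) (by exact_mod_cast hd)
  have hδ' : (0 : ℝ) < δ := by exact_mod_cast hδ
  constructor
  · rw [Int.le_floor]; push_cast; exact mul_le_mul_of_nonneg_left hlo hδ'.le
  · rw [Int.floor_lt]; push_cast; exact mul_lt_mul_of_pos_left hhi hδ'

theorem psi_lam (d δ : ℤ) :
    psi d δ (lam d δ) = min (psi d δ (p1 d δ)) (psi d δ (p1 d δ + 1)) := by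
  unfold lam
  split_ifs with h
  · exact (min_eq_left h).symm
  · push_cast; exact (min_eq_right (not_le.1 h).le).symm

theorem stmt_12 (d δ : ℤ) (hd : 2 ≤ d) (hδ : 1 ≤ δ) :
    psi d δ (lam d δ : ℝ) ≤ 4 * (δ : ℝ) * (d : ℝ) ^ 2 - 2 * (δ : ℝ) * (d : ℝ) - 1 ∧
    (δ = 1 → psi d δ (lam d δ : ℝ) = 4 * (δ : ℝ) * (d : ℝ) ^ 2 - 2 * (δ : ℝ) * (d : ℝ) - 1) ∧
    (2 ≤ δ → psi d δ (lam d δ : ℝ) < 4 * (δ : ℝ) * (d : ℝ) ^ 2 - 2 * (δ : ℝ) * (d : ℝ) - 1) := by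
  set q := ⌊(δ : ℝ) * √((d : ℝ) ^ 2 - d)⌋
  obtain ⟨hq_lo, hq_hi⟩ : q ∈ Set.Ico (δ * (d - 1)) (δ * d) :=
    floor_mul_sqrt_mem_Ico (by omega) (by omega)
  have hq_pos : (0 : ℝ) < q := by
    have : δ * (d - 1) ≥ 1 := one_le_mul_of_one_le_of_one_le hδ (by omega)
    exact_mod_cast (show 0 < q by omega)
  have hval : psi d δ (lam d δ) =
      min (psi d δ (δ * d - 1 + q)) (psi d δ (δ * d - 1 + (q + 1))) := by
    rw [psi_lam, p1, ← add_assoc]; push_cast; rfl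
  have heq : δ = 1 → psi d δ (lam d δ) = 4 * δ * d ^ 2 - 2 * δ * d - 1 := by
    rintro rfl
    have hq : (q : ℝ) = d - 1 := by exact_mod_cast (show q = d - 1 by omega)
    rw [hval, psi_shift _ _ hq_pos.ne', psi_shift _ _ (by positivity), hq]
    simp
  have hlt : 2 ≤ δ → psi d δ (lam d δ) < 4 * δ * d ^ 2 - 2 * δ * d - 1 := by
    intro hδ2
    rw [hval]
    rcases hq_lo.eq_or_lt with hq_eq | hq_gt
    · have hq_succ : q + 1 < δ * d := by rw [← hq_eq, mul_sub_one]; omega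
      exact min_lt_of_right_lt (psi_shift_lt (by omega) (by positivity)
        (by exact_mod_cast hq_eq.le.trans_lt (lt_add_one q)) (by exact_mod_cast hq_succ))
    · exact min_lt_of_left_lt
        (psi_shift_lt (by omega) hq_pos (by exact_mod_cast hq_gt) (by exact_mod_cast hq_hi))
  exact ⟨(eq_or_lt_of_le hδ).elim (fun h ↦ (heq h.symm).le) (fun h ↦ (hlt h).le), heq, hlt⟩
end

section
/- For any real h > 1, if x ≥ 1 + 2·ln(h)/ln(ln(h+2)), then x^x ≥ h. -/
/-!
Put `u = log (h + 2)`, `L = log u > 0` and `t = 2 log h / L`, so that `log h = t · (L / 2)`.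
Since `y ↦ y log y` is increasing on `[1, ∞)`, it suffices to show `t · (L / 2) ≤ (1 + t) log (1 + t)`.
The right-hand side is at least `t` and at least `t log (1 + t)`, so it is enough that
`L / 2 ≤ 1` or `L / 2 = log √u ≤ log (1 + t)`. In the remaining case `L > 2` we have `u > e² ≥ 3`,
and then `log u ≤ 2 (√u - 1)` together with `log h ≥ u - log 3` gives `√u - 1 ≤ t`.
-/

open Real

lemma le_one_add_mul_log_one_add {t : ℝ} (ht : 0 ≤ t) : t ≤ (1 + t) * log (1 + t) := by
  have h1t : 0 < 1 + t := by linarith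
  calc t = (1 + t) * (1 - (1 + t)⁻¹) := by field_simp; ring
    _ ≤ (1 + t) * log (1 + t) :=
      mul_le_mul_of_nonneg_left (one_sub_inv_le_log_of_pos h1t) h1t.le

lemma mul_le_one_add_mul_log_one_add {t c : ℝ} (ht : 0 ≤ t) (hc : c ≤ 1 ∨ c ≤ log (1 + t)) :
    t * c ≤ (1 + t) * log (1 + t) := by
  rcases hc with hc | hc
  · calc t * c ≤ t := mul_le_of_le_one_right ht hc
      _ ≤ (1 + t) * log (1 + t) := le_one_add_mul_log_one_add ht
  · calc t * c ≤ t * log (1 + t) := mul_le_mul_of_nonneg_left hc ht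
      _ ≤ (1 + t) * log (1 + t) :=
        mul_le_mul_of_nonneg_right (by linarith) (log_nonneg (by linarith))

lemma mul_log_le_mul_log {a b : ℝ} (ha : 1 ≤ a) (hab : a ≤ b) : a * log a ≤ b * log b :=
  mul_le_mul hab (log_le_log (by linarith) hab) (log_nonneg ha) (by linarith)

lemma sqrt_sub_one_mul_log_le {u : ℝ} (hu : 3 ≤ u) : (√u - 1) * log u ≤ 2 * (u - log 3) := by
  have hsq : √u ^ 2 = u := sq_sqrt (by linarith)
  have hs : 3 / 2 ≤ √u := by nlinarith [sqrt_nonneg u]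
  have hlog : log u ≤ 2 * (√u - 1) := by
    have := log_le_sub_one_of_pos (sqrt_pos.mpr (show 0 < u by linarith))
    rw [log_sqrt (by linarith)] at this
    linarith
  have hlog3 : log 3 ≤ 2 := by linarith [log_le_sub_one_of_pos (show (0 : ℝ) < 3 by norm_num)]
  nlinarith

lemma log_add_two_sub_log_three_le {h : ℝ} (hh : 1 ≤ h) : log (h + 2) - log 3 ≤ log h := by
  have : log (h + 2) ≤ log (3 * h) := log_le_log (by linarith) (by linarith)
  rw [log_mul (by norm_num) (by linarith)] at this
  linarith

lemma one_lt_log_add_two {h : ℝ} (hh : 1 < h) : 1 < log (h + 2) := by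
  rw [lt_log_iff_exp_lt (by linarith)]
  linarith [exp_one_lt_three]

lemma half_log_log_le {h : ℝ} (hh : 1 < h) :
    log (log (h + 2)) / 2 ≤ 1 ∨
      log (log (h + 2)) / 2 ≤ log (1 + 2 * log h / log (log (h + 2))) := by
  set u := log (h + 2)
  set L := log u
  rcases le_or_gt L 2 with hL | hL
  · left; linarith
  right
  have hu0 : 0 < u := by linarith [one_lt_log_add_two hh]
  have hu3 : 3 ≤ u := by
    have := (lt_log_iff_exp_lt hu0).mp hL
    linarith [add_one_le_exp 2]
  have hsqrt : √u - 1 ≤ 2 * log h / L := by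
    rw [le_div_iff₀ (by linarith)]
    linarith [sqrt_sub_one_mul_log_le hu3, log_add_two_sub_log_three_le hh.le]
  calc L / 2 = log √u := (log_sqrt hu0.le).symm
    _ ≤ log (1 + 2 * log h / L) := log_le_log (sqrt_pos.mpr hu0) (by linarith)

theorem stmt_15 (h x : ℝ) (hh : 1 < h)
    (hx : 1 + 2 * Real.log h / Real.log (Real.log (h + 2)) ≤ x) :
    h ≤ x ^ x := by
  set L := log (log (h + 2))
  set t := 2 * log h / L
  have hL : 0 < L := log_pos (one_lt_log_add_two hh)
  have ht : 0 ≤ t := div_nonneg (by linarith [log_pos hh]) hL.le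
  have hlogh : log h = t * (L / 2) := by simp only [t]; field_simp
  have hkey : log h ≤ x * log x :=
    calc log h ≤ (1 + t) * log (1 + t) := by
          rw [hlogh]; exact mul_le_one_add_mul_log_one_add ht (half_log_log_le hh)
      _ ≤ x * log x := mul_log_le_mul_log (by linarith) hx
  rw [rpow_def_of_pos (by linarith), ← exp_log (by linarith : 0 < h)]
  exact exp_le_exp.mpr (by linarith [mul_comm x (log x)])
end
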